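/- Assume the hypotheses of the refined Łojasiewicz–Simon gradient inequality for Banach spaces (continuous embeddings X ⊂ X̃ ⊂ X* with X ⊂ X* definite, U ⊂ X open, E : U → ℝ a C² function with gradient map M : U → X̃, critical point x∞ ∈ U, and M′(x∞) : X → X̃ Fredholm of index zero), except that instead of requiring M to be real analytic one requires that M is C¹ and that E is Morse–Bott at x∞. Then there exist constants Z ∈ (0,∞) and σ ∈ (0,1] such that for every x ∈ U with ‖x − x∞‖_X < σ one has ‖M(x)‖_{X̃} ≥ Z |E(x) − E(x∞)|^{1/2}, i.e. the Łojasiewicz–Simon gradient inequality holds with the optimal exponent θ = 1/2. -/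

import Mathlib

open Metric Set Filter

private theorem bdd_below_aux {X Xt : Type*} [NormedAddCommGroup X] [NormedSpace ℝ X]
    [CompleteSpace X] [NormedAddCommGroup Xt] [NormedSpace ℝ Xt] [CompleteSpace Xt]
    (A : X →L[ℝ] Xt) (hclo : IsClosed (Set.range A))
    (P : X →L[ℝ] (LinearMap.ker (A : X →ₗ[ℝ] Xt))) (hP : ∀ k : LinearMap.ker (A : X →ₗ[ℝ] Xt), P k = k) :
    ∃ c₀ > (0:ℝ), ∀ n : X, P n = 0 → c₀ * ‖n‖ ≤ ‖A n‖ := by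
  set N := LinearMap.ker (P : X →ₗ[ℝ] LinearMap.ker (A : X →ₗ[ℝ] Xt)) with hN
  have hNclosed : IsClosed (N : Set X) := ContinuousLinearMap.isClosed_ker P
  haveI : CompleteSpace N := hNclosed.completeSpace_coe
  set T : N →L[ℝ] Xt := A.comp N.subtypeL with hT
  have key : ∀ d : X, P d = 0 → A d = 0 → d = 0 := by
    intro d hPd hAd
    have hK : d ∈ LinearMap.ker (A : X →ₗ[ℝ] Xt) := LinearMap.mem_ker.2 hAd
    have h1 : P d = (⟨d, hK⟩ : LinearMap.ker (A : X →ₗ[ℝ] Xt)) := hP ⟨d, hK⟩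
    rw [hPd] at h1
    exact congrArg Subtype.val h1.symm
  have hTinj : Function.Injective T := by
    intro n m hnm
    have hPd : P ((n:X) - (m:X)) = 0 := by
      rw [map_sub, (show P n = 0 from LinearMap.mem_ker.1 n.2), (show P m = 0 from LinearMap.mem_ker.1 m.2), sub_self]
    have hAd : A ((n:X) - (m:X)) = 0 := by
      rw [map_sub]
      have : A (n:X) = A (m:X) := hnm
      rw [this, sub_self]
    have := key _ hPd hAd
    exact Subtype.ext (sub_eq_zero.1 this)
  have hrange : Set.range T = Set.range A := by
    ext y; constructor
    · rintro ⟨n, rfl⟩; exact ⟨(n:X), rfl⟩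
    · rintro ⟨x, rfl⟩
      have hxmem : x - ((P x : LinearMap.ker (A : X →ₗ[ℝ] Xt)) : X) ∈ N := by
        rw [hN, LinearMap.mem_ker, ContinuousLinearMap.coe_coe, map_sub, hP (P x), sub_self]
      refine ⟨⟨x - ((P x : LinearMap.ker (A : X →ₗ[ℝ] Xt)) : X), hxmem⟩, ?_⟩
      have hker : A ((P x : LinearMap.ker (A : X →ₗ[ℝ] Xt)) : X) = 0 := (P x).2
      simp [hT, ContinuousLinearMap.comp_apply, map_sub, hker]
  have hcloT : IsClosed (Set.range T) := hrange ▸ hclo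
  set e := T.equivRange hTinj hcloT with he
  have hanti := e.antilipschitz
  refine ⟨((‖(e.symm : LinearMap.range (T : N →ₗ[ℝ] Xt) →L[ℝ] N)‖₊ : ℝ) + 1)⁻¹, by positivity, ?_⟩
  intro n hn
  set nn : N := ⟨n, LinearMap.mem_ker.2 hn⟩ with hnn
  have h1 : ‖nn‖ ≤ (‖(e.symm : LinearMap.range (T : N →ₗ[ℝ] Xt) →L[ℝ] N)‖₊ : ℝ) * ‖e nn‖ := by
    have := hanti.le_mul_dist nn 0
    simpa [dist_eq_norm] using this
  have henorm : ‖e nn‖ = ‖A n‖ := by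
    have h2 : ((e nn : LinearMap.range (T : N →ₗ[ℝ] Xt)) : Xt) = T nn := by
      simp [he]
    rw [show ‖e nn‖ = ‖((e nn : LinearMap.range (T : N →ₗ[ℝ] Xt)) : Xt)‖ from rfl, h2]
    simp [hT, hnn]
  have hnorm : ‖nn‖ = ‖n‖ := rfl
  rw [hnorm, henorm] at h1
  rw [inv_mul_le_iff₀ (by positivity)]
  calc ‖n‖ ≤ (‖(e.symm : LinearMap.range (T : N →ₗ[ℝ] Xt) →L[ℝ] N)‖₊ : ℝ) * ‖A n‖ := h1
    _ ≤ ((‖(e.symm : LinearMap.range (T : N →ₗ[ℝ] Xt) →L[ℝ] N)‖₊ : ℝ) + 1) * ‖A n‖ := by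
        apply mul_le_mul_of_nonneg_right (by linarith) (norm_nonneg _)


/-- A bounded linear operator `T` between (real) normed spaces is *Fredholm with index
zero* if its kernel is finite-dimensional, its range is closed and has finite
codimension, and the dimension of the kernel equals the codimension of the range. -/
def IsFredholmIndexZero {X Y : Type*} [NormedAddCommGroup X] [NormedSpace ℝ X]
    [NormedAddCommGroup Y] [NormedSpace ℝ Y] (T : X →L[ℝ] Y) : Prop :=
  FiniteDimensional ℝ (LinearMap.ker (T : X →ₗ[ℝ] Y)) ∧ IsClosed (Set.range T) ∧
    FiniteDimensional ℝ (Y ⧸ LinearMap.range (T : X →ₗ[ℝ] Y)) ∧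
    Module.finrank ℝ (LinearMap.ker (T : X →ₗ[ℝ] Y)) = Module.finrank ℝ (Y ⧸ LinearMap.range (T : X →ₗ[ℝ] Y))

/-- A `C²` function `E : U → ℝ` on an open subset `U` of a Banach space `X` is
*Morse–Bott at a critical point* `x∞`, with respect to a closed subspace
`K ⊂ X` (in the application, `K = Ker E″(x∞)`, the kernel of the Hessian operator),
if near `x∞` the critical set `Crit E = {x ∈ U : E′(x) = 0}` is a (relatively open)
smooth submanifold of `X` whose tangent space at `x∞` equals `K`: there is an open
neighbourhood `V ⊆ U` of `x∞`, an open neighbourhood `W` of `0` in `K`, and a `C^∞`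
map `ψ : K → X` with `ψ 0 = x∞` and `(dψ)(0) = (K ↪ X)` (so the tangent space of the
critical submanifold at `x∞` is `K`), which is a homeomorphism from `W` onto
`V ∩ Crit E`. -/
def IsMorseBottAt {X : Type*} [NormedAddCommGroup X] [NormedSpace ℝ X]
    (E : X → ℝ) (U : Set X) (xInf : X) (K : Submodule ℝ X) : Prop :=
  ∃ (V : Set X) (W : Set K) (ψ : K → X),
    IsOpen V ∧ xInf ∈ V ∧ V ⊆ U ∧ IsOpen W ∧ (0 : K) ∈ W ∧
    ContDiffOn ℝ (⊤ : ℕ∞) ψ W ∧ ψ 0 = xInf ∧ fderiv ℝ ψ 0 = K.subtypeL ∧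
    Set.BijOn ψ W {x ∈ V | fderiv ℝ E x = 0} ∧
    ContinuousOn (Function.invFunOn ψ W) {x ∈ V | fderiv ℝ E x = 0}

set_option maxHeartbeats 1000000 in
/-- **Optimal Łojasiewicz–Simon gradient inequality for Morse–Bott functions on Banach
spaces.**

Assume the hypotheses of the refined Łojasiewicz–Simon gradient inequality: continuous
embeddings `X ⊂ X̃ ⊂ X*` (via injective continuous linear maps `i` and `ι`) with
`X ⊂ X*` definite, `U ⊂ X` open, `E : U → ℝ` a `C²` function with gradient map
`M : U → X̃` (so `E′(x) v = ⟨v, M(x)⟩_{X × X*}` on `U`), critical point `x∞ ∈ U`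
(`M(x∞) = 0`), and `M′(x∞) : X → X̃` Fredholm of index zero — except that instead of
requiring `M` to be real analytic we require that `M` is `C¹` and that `E` is
Morse–Bott at `x∞` (with respect to `K = Ker M′(x∞) = Ker E″(x∞)`).  Then there are
constants `Z ∈ (0, ∞)` and `σ ∈ (0, 1]` such that for every `x ∈ U` with
`‖x - x∞‖ < σ` one has `‖M(x)‖_{X̃} ≥ Z |E(x) - E(x∞)|^{1/2}`, i.e. the
Łojasiewicz–Simon gradient inequality holds with the optimal exponent `θ = 1/2`. -/
theorem lojasiewicz_simon_gradient_inequality_morse_bott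
    {X Xt : Type*} [NormedAddCommGroup X] [NormedSpace ℝ X] [CompleteSpace X]
    [NormedAddCommGroup Xt] [NormedSpace ℝ Xt] [CompleteSpace Xt]
    (i : X →L[ℝ] Xt) (hi : Function.Injective i)
    (ι : Xt →L[ℝ] StrongDual ℝ X) (hι : Function.Injective ι)
    (hdef : ∀ x : X, x ≠ 0 → ι (i x) x ≠ 0)
    (U : Set X) (hU : IsOpen U)
    (E : X → ℝ) (hE : ContDiffOn ℝ 2 E U)
    (M : X → Xt) (hM : ContDiffOn ℝ 1 M U)
    (hgrad : ∀ x ∈ U, fderiv ℝ E x = ι (M x))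
    (xInf : X) (hxInf : xInf ∈ U) (hcrit : M xInf = 0)
    (hHess : IsFredholmIndexZero (fderiv ℝ M xInf))
    (hMB : IsMorseBottAt E U xInf (LinearMap.ker (fderiv ℝ M xInf : X →ₗ[ℝ] Xt))) :
    ∃ Z σ : ℝ, 0 < Z ∧ σ ∈ Set.Ioc (0 : ℝ) 1 ∧
      ∀ x ∈ U, ‖x - xInf‖ < σ →
        Z * |E x - E xInf| ^ (1/2 : ℝ) ≤ ‖M x‖ := by
  classical
  unfold IsFredholmIndexZero at hHess
  unfold IsMorseBottAt at hMB
  obtain ⟨hKfd, hRclo, -, -⟩ := hHess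
  set A := fderiv ℝ M xInf with hA
  haveI : FiniteDimensional ℝ (LinearMap.ker (A : X →ₗ[ℝ] Xt)) := hKfd
  obtain ⟨V, W, ψ, hV, hxV, hVU, hW, h0W, hψ, hψ0, hψ', hbij, -⟩ := hMB
  -- projection
  obtain ⟨P, hP⟩ := Submodule.ClosedComplemented.of_finiteDimensional (LinearMap.ker (A : X →ₗ[ℝ] Xt))
  -- bounded below constant
  obtain ⟨c₀, hc₀, hbdd⟩ := bdd_below_aux A hRclo P hP
  -- critical points facts
  have hcritW : ∀ k ∈ W, ψ k ∈ V ∧ fderiv ℝ E (ψ k) = 0 ∧ M (ψ k) = 0 := by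
    intro k hk
    have hmem := hbij.mapsTo hk
    obtain ⟨hVmem, hfd⟩ := hmem
    refine ⟨hVmem, hfd, ?_⟩
    apply hι
    rw [map_zero, ← hgrad _ (hVU hVmem), hfd]
  -- differentiability of E and M on U
  have hEdiff : ∀ z ∈ U, DifferentiableAt ℝ E z := fun z hz =>
    (hE.contDiffAt (hU.mem_nhds hz)).differentiableAt two_ne_zero
  have hMdiff : ∀ z ∈ U, DifferentiableAt ℝ M z := fun z hz =>
    (hM.contDiffAt (hU.mem_nhds hz)).differentiableAt one_ne_zero
  -- radius for derivative bounds
  have hMc : ContinuousOn (fderiv ℝ M) U := hM.continuousOn_fderiv_of_isOpen hU le_rfl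
  have hMcx : ContinuousAt (fderiv ℝ M) xInf := hMc.continuousAt (hU.mem_nhds hxInf)
  have hepos : (0:ℝ) < min (c₀/2) 1 := lt_min (by linarith) one_pos
  obtain ⟨δ₁, hδ₁, hδ₁P⟩ := Metric.continuousAt_iff.1 hMcx _ hepos
  obtain ⟨δ₂, hδ₂, hδ₂U⟩ := Metric.isOpen_iff.1 hU xInf hxInf
  set r := min δ₁ δ₂ with hr
  have hrpos : 0 < r := lt_min hδ₁ hδ₂
  have hrU : ball xInf r ⊆ U := fun z hz => hδ₂U (ball_subset_ball (min_le_right _ _) hz)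
  have hrbound : ∀ z ∈ ball xInf r, ‖fderiv ℝ M z - A‖ ≤ c₀/2 ∧ ‖fderiv ℝ M z‖ ≤ ‖A‖ + 1 := by
    intro z hz
    have := hδ₁P (lt_of_lt_of_le (mem_ball.1 hz) (min_le_left _ _))
    rw [dist_eq_norm] at this
    constructor
    · exact le_trans (le_of_lt this) (min_le_left _ _)
    · have h2 : ‖fderiv ℝ M z - A‖ ≤ 1 := le_trans (le_of_lt this) (min_le_right _ _)
      calc ‖fderiv ℝ M z‖ = ‖(fderiv ℝ M z - A) + A‖ := by rw [sub_add_cancel]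
        _ ≤ ‖fderiv ℝ M z - A‖ + ‖A‖ := norm_add_le _ _
        _ ≤ ‖A‖ + 1 := by linarith
  -- radius in K on which E ∘ ψ is constant
  obtain ⟨rK, hrK, hrKW⟩ := Metric.isOpen_iff.1 hW 0 h0W
  have hEconst : ∀ k ∈ ball (0 : LinearMap.ker (A : X →ₗ[ℝ] Xt)) rK, E (ψ k) = E xInf := by
    intro k hk
    have hmvt := Convex.norm_image_sub_le_of_norm_hasFDerivWithin_le
      (f := fun k => E (ψ k)) (f' := fun _ => (0 : (LinearMap.ker (A : X →ₗ[ℝ] Xt)) →L[ℝ] ℝ))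
      (s := ball (0 : LinearMap.ker (A : X →ₗ[ℝ] Xt)) rK) (C := 0)
      ?_ (fun z _ => by simp) (convex_ball _ _) (mem_ball_self hrK) hk
    · have hle : ‖E (ψ k) - E (ψ 0)‖ ≤ 0 := by simpa using hmvt
      have h0 : E (ψ k) - E (ψ 0) = 0 := norm_le_zero_iff.1 hle
      rw [hψ0] at h0
      linarith
    · intro z hz
      have hzW : z ∈ W := hrKW hz
      have hψz : DifferentiableAt ℝ ψ z :=
        (hψ.contDiffAt (hW.mem_nhds hzW)).differentiableAt (by simp)
      have hU' : ψ z ∈ U := hVU (hcritW z hzW).1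
      have hEz : DifferentiableAt ℝ E (ψ z) := hEdiff _ hU'
      have hcomp : HasFDerivAt (fun k => E (ψ k))
          ((fderiv ℝ E (ψ z)).comp (fderiv ℝ ψ z)) z :=
        (hEz.hasFDerivAt).comp z hψz.hasFDerivAt
      rw [(hcritW z hzW).2.1, ContinuousLinearMap.zero_comp] at hcomp
      exact hcomp.hasFDerivWithinAt
  -- inverse function theorem for φ = P ∘ (ψ - xInf)
  set φ : (LinearMap.ker (A : X →ₗ[ℝ] Xt)) → (LinearMap.ker (A : X →ₗ[ℝ] Xt)) := fun k => P (ψ k - xInf) with hφdef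
  have hψdiff0 : HasFDerivAt ψ ((LinearMap.ker (A : X →ₗ[ℝ] Xt)).subtypeL) 0 := by
    have h1 : DifferentiableAt ℝ ψ 0 :=
      (hψ.contDiffAt (hW.mem_nhds h0W)).differentiableAt (by simp)
    have := h1.hasFDerivAt
    rwa [hψ'] at this
  have hφder : HasFDerivAt φ (P.comp (LinearMap.ker (A : X →ₗ[ℝ] Xt)).subtypeL) 0 := by
    have h1 : HasFDerivAt (fun k => ψ k - xInf) ((LinearMap.ker (A : X →ₗ[ℝ] Xt)).subtypeL) 0 :=
      hψdiff0.sub_const xInf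
    exact (P.hasFDerivAt).comp 0 h1
  have hPid : P.comp (LinearMap.ker (A : X →ₗ[ℝ] Xt)).subtypeL = ContinuousLinearMap.id ℝ (LinearMap.ker (A : X →ₗ[ℝ] Xt)) := by
    ext k
    simp [hP k]
  have hφC1 : ContDiffAt ℝ 1 φ 0 := by
    have h1 : ContDiffAt ℝ 1 ψ 0 := (hψ.contDiffAt (hW.mem_nhds h0W)).of_le (by simp)
    exact (P.contDiff.contDiffAt).comp 0 (h1.sub contDiffAt_const)
  have hstrict : HasStrictFDerivAt φ
      ((ContinuousLinearEquiv.refl ℝ (LinearMap.ker (A : X →ₗ[ℝ] Xt)) :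
        (LinearMap.ker (A : X →ₗ[ℝ] Xt)) ≃L[ℝ] (LinearMap.ker (A : X →ₗ[ℝ] Xt))) :
        (LinearMap.ker (A : X →ₗ[ℝ] Xt)) →L[ℝ] (LinearMap.ker (A : X →ₗ[ℝ] Xt))) 0 := by
    have h1 : HasStrictFDerivAt φ (fderiv ℝ φ 0) 0 := hφC1.hasStrictFDerivAt one_ne_zero
    rw [hφder.fderiv, hPid] at h1
    rwa [ContinuousLinearEquiv.coe_refl]
  have hφ0 : φ 0 = 0 := by simp [hφdef, hψ0]
  set g := hstrict.localInverse φ _ 0 with hg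
  have hgleft : g 0 = 0 := by
    have := hstrict.localInverse_apply_image
    rwa [hφ0] at this
  have hgcont : ContinuousAt g 0 := by
    have := hstrict.localInverse_continuousAt
    rwa [hφ0] at this
  have hgright : ∀ᶠ y in nhds (0 : LinearMap.ker (A : X →ₗ[ℝ] Xt)), φ (g y) = y := by
    have := hstrict.eventually_right_inverse
    rwa [hφ0] at this
  -- eventual conditions near 0 in K
  have hψcont : ContinuousAt ψ 0 := (hψ.contDiffAt (hW.mem_nhds h0W)).continuousAt
  have hψgcont : ContinuousAt (fun y => ψ (g y)) 0 := by
    have h1 : ContinuousAt ψ (g 0) := by rwa [hgleft]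
    exact h1.comp hgcont
  have hEv0 : ∀ᶠ y in nhds (0 : LinearMap.ker (A : X →ₗ[ℝ] Xt)),
      φ (g y) = y ∧ g y ∈ W ∧ g y ∈ ball (0 : LinearMap.ker (A : X →ₗ[ℝ] Xt)) rK ∧
        ψ (g y) ∈ ball xInf (r/2) := by
    refine hgright.and (Filter.Eventually.and ?_ (Filter.Eventually.and ?_ ?_))
    · exact hgcont.eventually_mem (by rw [hgleft]; exact hW.mem_nhds h0W)
    · exact hgcont.eventually_mem (by rw [hgleft]; exact ball_mem_nhds _ hrK)
    · refine hψgcont.eventually_mem ?_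
      have : ψ (g 0) = xInf := by rw [hgleft, hψ0]
      rw [this]
      exact ball_mem_nhds _ (by linarith)
  -- pull back along x ↦ P (x - xInf)
  have hF1 : ContinuousAt (fun x : X => P (x - xInf)) xInf :=
    (P.continuous.comp (continuous_id.sub continuous_const)).continuousAt
  have hF10 : P (xInf - xInf) = 0 := by rw [sub_self, map_zero]
  have hTend : Filter.Tendsto (fun x : X => P (x - xInf)) (nhds xInf)
      (nhds (0 : LinearMap.ker (A : X →ₗ[ℝ] Xt))) := by
    have := hF1.tendsto
    rwa [hF10] at this
  have hEvx : ∀ᶠ x in nhds xInf,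
      φ (g (P (x - xInf))) = P (x - xInf) ∧ g (P (x - xInf)) ∈ W ∧
        g (P (x - xInf)) ∈ ball (0 : LinearMap.ker (A : X →ₗ[ℝ] Xt)) rK ∧
        ψ (g (P (x - xInf))) ∈ ball xInf (r/2) := hTend.eventually hEv0
  obtain ⟨σ', hσ', hσ'P⟩ := Metric.eventually_nhds_iff.1 hEvx
  -- constants
  set L : ℝ := ‖A‖ + 1 with hL
  have hLpos : 0 < L := by positivity
  set CE : ℝ := ‖ι‖ * L with hCE
  have hCEnn : 0 ≤ CE := by positivity
  set Z : ℝ := (c₀/2) / (Real.sqrt CE + 1) with hZ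
  have hsqrt_nn : 0 ≤ Real.sqrt CE := Real.sqrt_nonneg _
  have hZpos : 0 < Z := by
    apply div_pos (by linarith) (by linarith)
  set σ : ℝ := min σ' (min (r/2) 1) with hσdef
  have hσpos : 0 < σ := lt_min hσ' (lt_min (by linarith) one_pos)
  refine ⟨Z, σ, hZpos, ⟨hσpos, le_trans (min_le_right _ _) (min_le_right _ _)⟩, ?_⟩
  intro x hxU hxσ
  have hdist : dist x xInf < σ := by rwa [dist_eq_norm]
  obtain ⟨hφk, hkW, hkball, hcball⟩ := hσ'P (lt_of_lt_of_le hdist (min_le_left _ _))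
  set k : LinearMap.ker (A : X →ₗ[ℝ] Xt) := g (P (x - xInf)) with hk
  set c : X := ψ k with hc
  have hxball : x ∈ ball xInf r := by
    rw [mem_ball, dist_eq_norm]
    calc ‖x - xInf‖ < σ := hxσ
      _ ≤ r/2 := le_trans (min_le_right _ _) (min_le_left _ _)
      _ < r := by linarith
  have hcball' : c ∈ ball xInf r := ball_subset_ball (by linarith) hcball
  have hcU : c ∈ U := hrU hcball'
  -- P (x - c) = 0
  have hPxc : P (x - c) = 0 := by
    have h1 : P (c - xInf) = P (x - xInf) := hφk
    have h2 : x - c = (x - xInf) - (c - xInf) := by abel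
    rw [h2, map_sub, h1, sub_self]
  have hMc0 : M c = 0 := (hcritW k hkW).2.2
  have hEc : E c = E xInf := hEconst k hkball
  set D : ℝ := ‖x - c‖ with hD
  have hDnn : 0 ≤ D := norm_nonneg _
  -- Estimate 1 : (c₀ / 2) * D ≤ ‖M x‖
  have hEst1 : (c₀ / 2) * D ≤ ‖M x‖ := by
    have hmvt := Convex.norm_image_sub_le_of_norm_hasFDerivWithin_le
      (f := fun z => M z - A z) (f' := fun z => fderiv ℝ M z - A)
      (s := ball xInf r) (C := c₀/2)
      (fun z hz => (((hMdiff z (hrU hz)).hasFDerivAt).sub A.hasFDerivAt).hasFDerivWithinAt)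
      (fun z hz => (hrbound z hz).1) (convex_ball _ _) hcball' hxball
    have heq : (M x - A x) - (M c - A c) = M x - A (x - c) := by
      rw [hMc0, map_sub]; abel
    rw [heq] at hmvt
    have hAlow : c₀ * D ≤ ‖A (x - c)‖ := hbdd (x - c) hPxc
    have htri : ‖A (x - c)‖ ≤ ‖M x‖ + ‖M x - A (x - c)‖ := by
      have he2 : M x - (M x - A (x - c)) = A (x - c) := by abel
      have h3 := norm_sub_le (M x) (M x - A (x - c))
      rwa [he2] at h3
    have : ‖M x - A (x - c)‖ ≤ (c₀/2) * D := hmvt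
    linarith
  -- Lipschitz bound for M on the ball
  have hMLip : ∀ z ∈ ball xInf r, ‖M z - M c‖ ≤ L * ‖z - c‖ := by
    intro z hz
    exact Convex.norm_image_sub_le_of_norm_hasFDerivWithin_le
      (f := M) (f' := fun z => fderiv ℝ M z) (s := ball xInf r) (C := L)
      (fun w hw => ((hMdiff w (hrU hw)).hasFDerivAt).hasFDerivWithinAt)
      (fun w hw => (hrbound w hw).2) (convex_ball _ _) hcball' hz
  -- Estimate 2 : |E x - E c| ≤ (‖ι‖ * (L * D)) * D
  have hEst2 : ‖E x - E c‖ ≤ (‖ι‖ * (L * D)) * D := by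
    have hseg : segment ℝ c x ⊆ ball xInf r :=
      (convex_ball xInf r).segment_subset hcball' hxball
    have hsegnorm : ∀ z ∈ segment ℝ c x, ‖z - c‖ ≤ D := by
      rintro z ⟨a, b, ha, hb, hab, rfl⟩
      have : a • c + b • x - c = b • (x - c) := by
        have : a = 1 - b := by linarith
        rw [this]; module
      rw [this, norm_smul, Real.norm_eq_abs, abs_of_nonneg hb]
      calc b * ‖x - c‖ ≤ 1 * ‖x - c‖ := by
            apply mul_le_mul_of_nonneg_right (by linarith) hDnn
        _ = D := by rw [one_mul]
    exact Convex.norm_image_sub_le_of_norm_hasFDerivWithin_le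
      (f := E) (f' := fun z => fderiv ℝ E z) (s := segment ℝ c x) (C := ‖ι‖ * (L * D))
      (fun z hz => ((hEdiff z (hrU (hseg hz))).hasFDerivAt).hasFDerivWithinAt)
      (fun z hz => by
        show ‖fderiv ℝ E z‖ ≤ ‖ι‖ * (L * D)
        rw [hgrad z (hrU (hseg hz))]
        calc ‖(ι (M z) : StrongDual ℝ X)‖ ≤ ‖ι‖ * ‖M z‖ := ι.le_opNorm _
          _ ≤ ‖ι‖ * (L * D) := by
              apply mul_le_mul_of_nonneg_left ?_ (norm_nonneg ι)
              have h1 : ‖M z - M c‖ ≤ L * ‖z - c‖ := hMLip z (hseg hz)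
              rw [hMc0, sub_zero] at h1
              calc ‖M z‖ ≤ L * ‖z - c‖ := h1
                _ ≤ L * D := by
                    apply mul_le_mul_of_nonneg_left (hsegnorm z hz) (le_of_lt hLpos))
      (convex_segment _ _) (left_mem_segment _ _ _) (right_mem_segment _ _ _)
  -- conclude
  have hExc : |E x - E xInf| ≤ CE * D^2 := by
    rw [← hEc]
    calc |E x - E c| ≤ (‖ι‖ * (L * D)) * D := hEst2
      _ = CE * D^2 := by rw [hCE]; ring
  have hsq : |E x - E xInf| ^ (1/2 : ℝ) ≤ Real.sqrt CE * D := by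
    rw [← Real.sqrt_eq_rpow]
    calc Real.sqrt |E x - E xInf| ≤ Real.sqrt (CE * D^2) := Real.sqrt_le_sqrt hExc
      _ = Real.sqrt CE * Real.sqrt (D^2) := Real.sqrt_mul hCEnn _
      _ = Real.sqrt CE * D := by rw [Real.sqrt_sq hDnn]
  have hZCE : Z * Real.sqrt CE ≤ c₀/2 := by
    have h1 : Z * (Real.sqrt CE + 1) = c₀/2 := div_mul_cancel₀ _ (by linarith)
    nlinarith
  calc Z * |E x - E xInf| ^ (1/2 : ℝ) ≤ Z * (Real.sqrt CE * D) := by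
        apply mul_le_mul_of_nonneg_left hsq (le_of_lt hZpos)
    _ = (Z * Real.sqrt CE) * D := by ring
    _ ≤ (c₀/2) * D := mul_le_mul_of_nonneg_right hZCE hDnn
    _ ≤ ‖M x‖ := hEst1
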